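/- Fix an integer m ≥ 1. Let A₀, A₁, A₀₁ be commutative rings with homomorphisms α₀ : A₀ → A₀₁ and α₁ : A₁ → A₀₁, and let A = {(a₀, a₁) ∈ A₀ × A₁ : α₀(a₀) = α₁(a₁)} be the fiber product ring; likewise let B₀, B₁, B₀₁ with β₀, β₁ have fiber product B. Let φ₀ : A₀ → B₀, φ₁ : A₁ → B₁, φ₀₁ : A₀₁ → B₀₁ be ring homomorphisms satisfying β₀ ∘ φ₀ = φ₀₁ ∘ α₀ and β₁ ∘ φ₁ = φ₀₁ ∘ α₁, and let φ : A → B be the induced homomorphism. If each of φ₀, φ₁, φ₀₁ belongs to the class W(m), then φ belongs to W(m). -/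

import Mathlib

/-- The multiplicative set of integers coprime to `p`. -/
def intCoprime (p : ℕ) : Submonoid ℤ where
  carrier := {n : ℤ | IsCoprime n (p : ℤ)}
  one_mem' := isCoprime_one_left
  mul_mem' := fun ha hb => IsCoprime.mul_left ha hb

/-- The image in a commutative ring `A` of the multiplicative set of integers coprime to `p`. -/
def intCoprimeIn (p : ℕ) (A : Type*) [CommRing A] : Submonoid A :=
  (intCoprime p).map (Int.castRingHom A).toMonoidHom

/-- The localization of `A` at the multiplicative set of integers coprime to `p`,
i.e. `A ⊗_ℤ ℤ₍ₚ₎`. -/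
abbrev LocAt (p : ℕ) (A : Type*) [CommRing A] := Localization (intCoprimeIn p A)

/-- The homomorphism between the localizations at `p` induced by `f : A →+* B`. -/
noncomputable def locMap (p : ℕ) {A B : Type*} [CommRing A] [CommRing B] (f : A →+* B) :
    LocAt p A →+* LocAt p B :=
  IsLocalization.map (M := intCoprimeIn p A) (T := intCoprimeIn p B)
      (Localization (intCoprimeIn p B)) f
    (by
      intro a ha
      obtain ⟨n, hn, rfl⟩ := (Submonoid.mem_map (f := (Int.castRingHom A).toMonoidHom)).mp ha
      exact Submonoid.mem_comap.mpr
        ((Submonoid.mem_map (f := (Int.castRingHom B).toMonoidHom)).mpr ⟨n, hn, by simp⟩))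

/-- A uniform `F_p`-isomorphism: there are `M ≥ 1` and `m₀ ≥ 0` such that `x ^ M = 0` for
every element `x` of the kernel and `y ^ (p ^ m₀)` lies in the image for every `y` in the
target. -/
def IsUniformFpIso (p : ℕ) {R S : Type*} [CommRing R] [CommRing S] (g : R →+* S) : Prop :=
  ∃ M : ℕ, 1 ≤ M ∧ ∃ m₀ : ℕ,
    (∀ x ∈ RingHom.ker g, x ^ M = 0) ∧ ∀ y : S, y ^ p ^ m₀ ∈ Set.range g

/-- The class `W(m)`: the kernel and cokernel of `f` are annihilated by a power of `m`,
and for every prime `p` the induced map of localizations at `p` is a uniform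
`F_p`-isomorphism. -/
def MemW (m : ℕ) {R S : Type*} [CommRing R] [CommRing S] (f : R →+* S) : Prop :=
  (∃ k : ℕ, (∀ x ∈ RingHom.ker f, (m : R) ^ k * x = 0) ∧
    ∀ s : S, (m : S) ^ k * s ∈ Set.range f) ∧
  ∀ p : ℕ, p.Prime → IsUniformFpIso p (locMap p f)

/-- The fiber product `{(a₀, a₁) : α₀ a₀ = α₁ a₁}` of two ring homomorphisms, as a subring
of the product. -/
def fiberProduct {A₀ A₁ A₀₁ : Type*} [CommRing A₀] [CommRing A₁] [CommRing A₀₁]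
    (α₀ : A₀ →+* A₀₁) (α₁ : A₁ →+* A₀₁) : Subring (A₀ × A₁) :=
  RingHom.eqLocus (α₀.comp (RingHom.fst A₀ A₁)) (α₁.comp (RingHom.snd A₀ A₁))

/-- The homomorphism between fiber products induced by a map of cospans. -/
def fiberMap {A₀ A₁ A₀₁ B₀ B₁ B₀₁ : Type*}
    [CommRing A₀] [CommRing A₁] [CommRing A₀₁] [CommRing B₀] [CommRing B₁] [CommRing B₀₁]
    (α₀ : A₀ →+* A₀₁) (α₁ : A₁ →+* A₀₁) (β₀ : B₀ →+* B₀₁) (β₁ : B₁ →+* B₀₁)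
    (φ₀ : A₀ →+* B₀) (φ₁ : A₁ →+* B₁) (φ₀₁ : A₀₁ →+* B₀₁)
    (h₀ : β₀.comp φ₀ = φ₀₁.comp α₀) (h₁ : β₁.comp φ₁ = φ₀₁.comp α₁) :
    fiberProduct α₀ α₁ →+* fiberProduct β₀ β₁ :=
  RingHom.restrict (φ₀.prodMap φ₁) (fiberProduct α₀ α₁) (fiberProduct β₀ β₁)
    (fun x hx => by
      have hx' : α₀ x.1 = α₁ x.2 := hx
      show β₀ (φ₀ x.1) = β₁ (φ₁ x.2)
      rw [← RingHom.comp_apply, h₀, ← RingHom.comp_apply, h₁, RingHom.comp_apply,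
        RingHom.comp_apply, hx'])

/-!
Integrally, lift `m^k b₀` and `m^k b₁` to `a₀ ∈ A₀`, `a₁ ∈ A₁`; the defect `α₀ a₀ - α₁ a₁` lies
in `ker φ₀₁`, hence is killed by `m^l`, so `(m^l a₀, m^l a₁)` lies in the fiber product and lifts
`m^(k+l) b`. Kernels are handled componentwise.

After inverting the integers prime to `p`, both conditions can be read in the rings themselves,
up to factors prime to `p`. The same lifting now produces a defect `d` which, up to such a factor,
is killed by `p^c` (as `m ≠ 0`) and satisfies `d^(p^s) = 0`. For such `d` the binomial theorem
gives `(x + d)^((p^s)^c) = x^((p^s)^c)`, so the `(p^s)^c`-th power of the lift lies in the fiber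
product.
-/

open RingHom

theorem add_pow_prime_pow_pow_eq {R : Type*} [CommSemiring R] {p : ℕ} (hp : p.Prime) (s : ℕ) :
    ∀ (c : ℕ) {x d : R}, (p : R) ^ c * d = 0 → d ^ p ^ s = 0 →
      (x + d) ^ (p ^ s) ^ c = x ^ (p ^ s) ^ c
  | 0, x, d, hd, _ => by rw [pow_zero, one_mul] at hd; rw [hd, add_zero]
  | c + 1, x, d, hd, hds => by
    obtain ⟨r, hr⟩ := exists_add_pow_prime_pow_eq hp x d s
    have hE : (p : R) ^ c * (p * x * d * r) = 0 := by
      rw [show (p : R) ^ c * (p * x * d * r) = (p : R) ^ (c + 1) * d * (x * r) by ring, hd,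
        zero_mul]
    have hEs : (p * x * d * r : R) ^ p ^ s = 0 := by
      rw [show (p * x * d * r : R) = p * x * r * d by ring, mul_pow, hds, mul_zero]
    rw [pow_succ', pow_mul, pow_mul, hr, hds, add_zero, add_pow_prime_pow_pow_eq hp s c hE hEs]

theorem mul_pow_eq_zero_of_mul_pow_eq_zero {R : Type*} [CommMonoidWithZero R] {a x : R}
    {M N : ℕ} (hM : 1 ≤ M) (hMN : M ≤ N) (h : a * x ^ M = 0) : (a * x) ^ N = 0 := by
  refine pow_eq_zero_of_le hMN ?_
  obtain ⟨M, rfl⟩ := Nat.exists_eq_add_of_le' hM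
  rw [mul_pow, pow_succ a, mul_assoc, h, mul_zero]

theorem pow_mul_mem_range_of_le {R S : Type*} [CommRing R] [CommRing S] {f : R →+* S}
    {m k l : ℕ} (hkl : k ≤ l) (h : ∀ b, (m : S) ^ k * b ∈ Set.range f) (b : S) :
    (m : S) ^ l * b ∈ Set.range f := by
  obtain ⟨a, ha⟩ := h b
  refine ⟨(m : R) ^ (l - k) * a, ?_⟩
  rw [map_mul, map_pow, map_natCast, ha, ← mul_assoc, ← pow_add, Nat.sub_add_cancel hkl]

theorem mem_intCoprime {p : ℕ} {n : ℤ} : n ∈ intCoprime p ↔ IsCoprime n p := Iff.rfl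

theorem exists_eq_prime_pow_mul_intCoprime {p m : ℕ} (hp : p.Prime) (hm : m ≠ 0) :
    ∃ c : ℕ, ∃ w ∈ intCoprime p, (m : ℤ) = p ^ c * w := by
  obtain ⟨c, w, hpw, rfl⟩ := Nat.exists_eq_pow_mul_and_not_dvd hm p hp.ne_one
  refine ⟨c, w, ?_, by push_cast; ring⟩
  rw [mem_intCoprime, Nat.isCoprime_iff_coprime]
  exact Nat.coprime_comm.1 ((Nat.Prime.coprime_iff_not_dvd hp).2 hpw)

namespace LocAt

variable {p : ℕ} {A B : Type*} [CommRing A] [CommRing B]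

theorem isUnit_intCast {n : ℤ} (hn : n ∈ intCoprime p) : IsUnit (n : LocAt p A) := by
  simpa using IsLocalization.map_units (LocAt p A) (⟨n, n, hn, rfl⟩ : intCoprimeIn p A)

theorem exists_mul_intCast_eq_algebraMap (x : LocAt p A) :
    ∃ a : A, ∃ n ∈ intCoprime p, x * n = algebraMap A (LocAt p A) a := by
  obtain ⟨⟨a, ⟨_, n, hn, rfl⟩⟩, h⟩ := IsLocalization.surj (intCoprimeIn p A) x
  exact ⟨a, n, hn, by simpa using h⟩

theorem algebraMap_eq_zero_iff {a : A} :
    algebraMap A (LocAt p A) a = 0 ↔ ∃ n ∈ intCoprime p, (n : A) * a = 0 := by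
  rw [IsLocalization.map_eq_zero_iff (intCoprimeIn p A)]
  constructor
  · rintro ⟨⟨_, n, hn, rfl⟩, h⟩
    exact ⟨n, hn, h⟩
  · rintro ⟨n, hn, h⟩
    exact ⟨⟨n, n, hn, rfl⟩, h⟩

theorem locMap_algebraMap (f : A →+* B) (a : A) :
    locMap p f (algebraMap A (LocAt p A) a) = algebraMap B (LocAt p B) (f a) :=
  IsLocalization.map_eq _ _

theorem forall_mem_ker_locMap_pow_eq_zero_iff (f : A →+* B) (M : ℕ) :
    (∀ x ∈ ker (locMap p f), x ^ M = 0) ↔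
      ∀ a ∈ ker f, ∃ n ∈ intCoprime p, (n : A) * a ^ M = 0 := by
  constructor
  · intro h a ha
    rw [← algebraMap_eq_zero_iff, map_pow]
    exact h _ (by rw [mem_ker, locMap_algebraMap, mem_ker.1 ha, map_zero])
  · intro h x hx
    obtain ⟨a, n, hn, hxa⟩ := exists_mul_intCast_eq_algebraMap x
    have hfa : algebraMap B (LocAt p B) (f a) = 0 := by
      rw [← locMap_algebraMap, ← hxa, map_mul, mem_ker.1 hx, zero_mul]
    obtain ⟨n', hn', hn'a⟩ := algebraMap_eq_zero_iff.1 hfa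
    obtain ⟨n'', hn'', hn''a⟩ := h ((n' : A) * a) (by rw [mem_ker, map_mul, map_intCast, hn'a])
    have hunit : IsUnit ((n'' * n' ^ M * n ^ M : ℤ) : LocAt p A) :=
      isUnit_intCast (mul_mem (mul_mem hn'' (pow_mem hn' M)) (pow_mem hn M))
    rw [← hunit.mul_left_eq_zero]
    calc x ^ M * ((n'' * n' ^ M * n ^ M : ℤ) : LocAt p A)
        = algebraMap A _ ((n'' : A) * ((n' : A) * a) ^ M) := by
          rw [map_mul, map_pow, map_mul, map_intCast, map_intCast, ← hxa]; push_cast; ring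
      _ = 0 := by rw [hn''a, map_zero]

theorem forall_pow_mem_range_locMap_iff (f : A →+* B) (k : ℕ) :
    (∀ y : LocAt p B, y ^ k ∈ Set.range (locMap p f)) ↔
      ∀ b : B, ∃ n ∈ intCoprime p, (n : B) * b ^ k ∈ Set.range f := by
  constructor
  · intro h b
    obtain ⟨x, hx⟩ := h (algebraMap B _ b)
    obtain ⟨a, n, hn, hxa⟩ := exists_mul_intCast_eq_algebraMap x
    have : algebraMap B (LocAt p B) ((n : B) * b ^ k - f a) = 0 := by
      rw [map_sub, ← locMap_algebraMap, ← hxa, map_mul (locMap p f), hx, map_mul, map_pow,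
        map_intCast, map_intCast, mul_comm, sub_self]
    obtain ⟨n', hn', h'⟩ := algebraMap_eq_zero_iff.1 this
    refine ⟨n' * n, mul_mem hn' hn, (n' : A) * a, ?_⟩
    rw [map_mul, map_intCast]
    push_cast
    linear_combination -h'
  · intro h y
    obtain ⟨b, n, hn, hyb⟩ := exists_mul_intCast_eq_algebraMap y
    obtain ⟨n', hn', a, ha⟩ := h b
    obtain ⟨u, hu⟩ := isUnit_intCast (A := A) (mul_mem (pow_mem hn k) hn')
    have hfu : locMap p f u = ((n ^ k * n' : ℤ) : LocAt p B) := by rw [hu, map_intCast]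
    refine ⟨algebraMap A _ a * ↑u⁻¹, ?_⟩
    calc locMap p f (algebraMap A _ a * ↑u⁻¹) = y ^ k * locMap p f u * locMap p f ↑u⁻¹ := by
          rw [map_mul, locMap_algebraMap, ha, hfu, map_mul, map_intCast, map_pow, ← hyb]
          push_cast; ring
      _ = y ^ k := by rw [mul_assoc, ← map_mul, Units.mul_inv, map_one, mul_one]

theorem isUniformFpIso_locMap_iff (f : A →+* B) :
    IsUniformFpIso p (locMap p f) ↔ ∃ M : ℕ, 1 ≤ M ∧ ∃ N : ℕ,
      (∀ a ∈ ker f, ∃ n ∈ intCoprime p, (n : A) * a ^ M = 0) ∧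
        ∀ b : B, ∃ n ∈ intCoprime p, (n : B) * b ^ p ^ N ∈ Set.range f := by
  simp only [IsUniformFpIso, forall_mem_ker_locMap_pow_eq_zero_iff,
    forall_pow_mem_range_locMap_iff]

end LocAt

section FiberProduct

variable {A₀ A₁ A₀₁ B₀ B₁ B₀₁ : Type*}
  [CommRing A₀] [CommRing A₁] [CommRing A₀₁] [CommRing B₀] [CommRing B₁] [CommRing B₀₁]
  {α₀ : A₀ →+* A₀₁} {α₁ : A₁ →+* A₀₁} {β₀ : B₀ →+* B₀₁} {β₁ : B₁ →+* B₀₁}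
  {φ₀ : A₀ →+* B₀} {φ₁ : A₁ →+* B₁} {φ₀₁ : A₀₁ →+* B₀₁}

theorem mem_fiberProduct {x : A₀ × A₁} : x ∈ fiberProduct α₀ α₁ ↔ α₀ x.1 = α₁ x.2 := Iff.rfl

theorem sub_mem_ker_of_map_eq (h₀ : β₀.comp φ₀ = φ₀₁.comp α₀) (h₁ : β₁.comp φ₁ = φ₀₁.comp α₁)
    {x₀ : A₀} {x₁ : A₁} (y : fiberProduct β₀ β₁) (hx₀ : φ₀ x₀ = (y : B₀ × B₁).1)
    (hx₁ : φ₁ x₁ = (y : B₀ × B₁).2) : α₀ x₀ - α₁ x₁ ∈ ker φ₀₁ := by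
  have e₀ := RingHom.congr_fun h₀ x₀
  have e₁ := RingHom.congr_fun h₁ x₁
  simp only [comp_apply] at e₀ e₁
  rw [mem_ker, map_sub, ← e₀, ← e₁, hx₀, hx₁, sub_eq_zero]
  exact y.2

variable {h₀ : β₀.comp φ₀ = φ₀₁.comp α₀} {h₁ : β₁.comp φ₁ = φ₀₁.comp α₁}

@[simp]
theorem coe_fiberMap_apply (x : fiberProduct α₀ α₁) :
    (fiberMap α₀ α₁ β₀ β₁ φ₀ φ₁ φ₀₁ h₀ h₁ x : B₀ × B₁) =
      (φ₀ (x : A₀ × A₁).1, φ₁ (x : A₀ × A₁).2) :=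
  rfl

theorem mem_ker_fiberMap {x : fiberProduct α₀ α₁} :
    x ∈ ker (fiberMap α₀ α₁ β₀ β₁ φ₀ φ₁ φ₀₁ h₀ h₁) ↔
      (x : A₀ × A₁).1 ∈ ker φ₀ ∧ (x : A₀ × A₁).2 ∈ ker φ₁ := by
  rw [mem_ker, mem_ker, mem_ker, ← Subtype.coe_inj, coe_fiberMap_apply]
  exact Prod.mk_eq_zero

theorem pow_mul_eq_zero_of_mem_ker_fiberMap {m k : ℕ}
    (hk₀ : ∀ x ∈ ker φ₀, (m : A₀) ^ k * x = 0) (hk₁ : ∀ x ∈ ker φ₁, (m : A₁) ^ k * x = 0) :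
    ∀ x ∈ ker (fiberMap α₀ α₁ β₀ β₁ φ₀ φ₁ φ₀₁ h₀ h₁), (m : fiberProduct α₀ α₁) ^ k * x = 0 := by
  intro x hx
  rw [mem_ker_fiberMap] at hx
  refine Subtype.ext (Prod.ext ?_ ?_)
  · simpa using hk₀ _ hx.1
  · simpa using hk₁ _ hx.2

theorem pow_add_mul_mem_range_fiberMap {m k l : ℕ}
    (hk₀ : ∀ b, (m : B₀) ^ k * b ∈ Set.range φ₀) (hk₁ : ∀ b, (m : B₁) ^ k * b ∈ Set.range φ₁)
    (hl : ∀ x ∈ ker φ₀₁, (m : A₀₁) ^ l * x = 0) (b : fiberProduct β₀ β₁) :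
    (m : fiberProduct β₀ β₁) ^ (k + l) * b ∈ Set.range (fiberMap α₀ α₁ β₀ β₁ φ₀ φ₁ φ₀₁ h₀ h₁) := by
  obtain ⟨x₀, hx₀⟩ := hk₀ (b : B₀ × B₁).1
  obtain ⟨x₁, hx₁⟩ := hk₁ (b : B₀ × B₁).2
  have hd := hl _ (sub_mem_ker_of_map_eq h₀ h₁ ((m : fiberProduct β₀ β₁) ^ k * b)
    (by simpa using hx₀) (by simpa using hx₁))
  have hmem : ((m : A₀) ^ l * x₀, (m : A₁) ^ l * x₁) ∈ fiberProduct α₀ α₁ := by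
    rw [mem_fiberProduct, map_mul, map_mul, map_pow, map_pow, map_natCast, map_natCast]
    linear_combination hd
  refine ⟨⟨_, hmem⟩, Subtype.ext (Prod.ext ?_ ?_)⟩ <;>
    simp only [coe_fiberMap_apply, map_mul, map_pow, map_natCast, hx₀, hx₁, Subring.coe_mul,
      SubmonoidClass.coe_pow, SubringClass.coe_natCast, Prod.fst_mul, Prod.snd_mul, Prod.pow_fst,
      Prod.pow_snd, Prod.fst_natCast, Prod.snd_natCast] <;>
    ring

theorem exists_intCast_mul_pow_eq_zero_of_mem_ker_fiberMap {p M₀ M₁ : ℕ}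
    (hM₀ : ∀ a ∈ ker φ₀, ∃ n ∈ intCoprime p, (n : A₀) * a ^ M₀ = 0)
    (hM₁ : ∀ a ∈ ker φ₁, ∃ n ∈ intCoprime p, (n : A₁) * a ^ M₁ = 0) :
    ∀ a ∈ ker (fiberMap α₀ α₁ β₀ β₁ φ₀ φ₁ φ₀₁ h₀ h₁),
      ∃ n ∈ intCoprime p, (n : fiberProduct α₀ α₁) * a ^ (M₀ + M₁) = 0 := by
  intro a ha
  rw [mem_ker_fiberMap] at ha
  obtain ⟨n₀, hn₀, e₀⟩ := hM₀ _ ha.1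
  obtain ⟨n₁, hn₁, e₁⟩ := hM₁ _ ha.2
  refine ⟨n₀ * n₁, mul_mem hn₀ hn₁, Subtype.ext (Prod.ext ?_ ?_)⟩ <;>
    simp only [Int.cast_mul, pow_add, Subring.coe_mul, SubringClass.coe_intCast,
      SubmonoidClass.coe_pow, Prod.fst_mul, Prod.snd_mul, Prod.fst_intCast, Prod.snd_intCast,
      Prod.pow_fst, Prod.pow_snd, ZeroMemClass.coe_zero, Prod.fst_zero, Prod.snd_zero]
  · linear_combination ((n₁ : A₀) * (a : A₀ × A₁).1 ^ M₁) * e₀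
  · linear_combination ((n₀ : A₁) * (a : A₀ × A₁).2 ^ M₀) * e₁

theorem exists_intCast_mul_pow_mem_range_fiberMap {p N₀ N₁ c s : ℕ} (hp : p.Prime)
    (hN₀ : ∀ b, ∃ n ∈ intCoprime p, (n : B₀) * b ^ p ^ N₀ ∈ Set.range φ₀)
    (hN₁ : ∀ b, ∃ n ∈ intCoprime p, (n : B₁) * b ^ p ^ N₁ ∈ Set.range φ₁)
    (htors : ∀ x ∈ ker φ₀₁, ∃ n ∈ intCoprime p, (p : A₀₁) ^ c * ((n : A₀₁) * x) = 0)
    (hnil : ∀ x ∈ ker φ₀₁, ∃ n ∈ intCoprime p, ((n : A₀₁) * x) ^ p ^ s = 0)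
    (b : fiberProduct β₀ β₁) :
    ∃ n ∈ intCoprime p, (n : fiberProduct β₀ β₁) * b ^ p ^ (N₀ + N₁ + s * c) ∈
      Set.range (fiberMap α₀ α₁ β₀ β₁ φ₀ φ₁ φ₀₁ h₀ h₁) := by
  obtain ⟨n₀, hn₀, x₀, hx₀⟩ := hN₀ ((b : B₀ × B₁).1 ^ p ^ N₁)
  obtain ⟨n₁, hn₁, x₁, hx₁⟩ := hN₁ ((b : B₀ × B₁).2 ^ p ^ N₀)
  have hd : α₀ ((n₁ : A₀) * x₀) - α₁ ((n₀ : A₁) * x₁) ∈ ker φ₀₁ :=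
    sub_mem_ker_of_map_eq h₀ h₁ ((n₀ * n₁ : ℤ) * b ^ p ^ (N₀ + N₁))
      (by simp only [map_mul, map_intCast, hx₀, Int.cast_mul, pow_add, pow_mul, Subring.coe_mul,
        SubringClass.coe_intCast, SubmonoidClass.coe_pow, Prod.fst_mul, Prod.fst_intCast,
        Prod.pow_fst]; ring)
      (by simp only [map_mul, map_intCast, hx₁, Int.cast_mul, pow_add, pow_mul, Subring.coe_mul,
        SubringClass.coe_intCast, SubmonoidClass.coe_pow, Prod.snd_mul, Prod.snd_intCast,
        Prod.pow_snd]; ring)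
  obtain ⟨t, ht, htd⟩ := htors _ hd
  obtain ⟨u, hu, hud⟩ := hnil _ hd
  set d := α₀ ((n₁ : A₀) * x₀) - α₁ ((n₀ : A₁) * x₁)
  have hD : (p : A₀₁) ^ c * ((t * u : ℤ) * d) = 0 := by
    rw [Int.cast_mul]
    linear_combination (u : A₀₁) * htd
  have hDs : (((t * u : ℤ) : A₀₁) * d) ^ p ^ s = 0 := by
    rw [Int.cast_mul, mul_assoc, mul_pow, hud, mul_zero]
  have hmem : ((((t * u : ℤ) : A₀) * ((n₁ : A₀) * x₀)) ^ (p ^ s) ^ c,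
      (((t * u : ℤ) : A₁) * ((n₀ : A₁) * x₁)) ^ (p ^ s) ^ c) ∈ fiberProduct α₀ α₁ := by
    have hsplit : α₀ (((t * u : ℤ) : A₀) * ((n₁ : A₀) * x₀)) =
        α₁ (((t * u : ℤ) : A₁) * ((n₀ : A₁) * x₁)) + (t * u : ℤ) * d := by
      simp only [map_mul, map_intCast, d]
      ring
    rw [mem_fiberProduct, map_pow, map_pow, hsplit, add_pow_prime_pow_pow_eq hp s c hD hDs]
  refine ⟨(t * u * n₀ * n₁) ^ (p ^ s) ^ c, pow_mem (mul_mem (mul_mem (mul_mem ht hu) hn₀) hn₁) _,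
    ⟨_, hmem⟩, Subtype.ext (Prod.ext ?_ ?_)⟩ <;>
    simp only [Int.cast_mul, coe_fiberMap_apply, map_pow, map_mul, map_intCast, hx₀, hx₁,
      Int.cast_pow, pow_add, pow_mul, Subring.coe_mul, SubmonoidClass.coe_pow,
      SubringClass.coe_intCast, Prod.fst_mul, Prod.snd_mul, Prod.pow_fst, Prod.pow_snd,
      Prod.fst_intCast, Prod.snd_intCast] <;>
    ring

theorem isUniformFpIso_locMap_fiberMap {p m k : ℕ} (hp : p.Prime) (hm : m ≠ 0)
    (hk : ∀ x ∈ ker φ₀₁, (m : A₀₁) ^ k * x = 0)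
    (hφ₀ : IsUniformFpIso p (locMap p φ₀)) (hφ₁ : IsUniformFpIso p (locMap p φ₁))
    (hφ₀₁ : IsUniformFpIso p (locMap p φ₀₁)) :
    IsUniformFpIso p (locMap p (fiberMap α₀ α₁ β₀ β₁ φ₀ φ₁ φ₀₁ h₀ h₁)) := by
  rw [LocAt.isUniformFpIso_locMap_iff] at hφ₀ hφ₁ hφ₀₁ ⊢
  obtain ⟨M₀, hM₀, N₀, hker₀, him₀⟩ := hφ₀
  obtain ⟨M₁, -, N₁, hker₁, him₁⟩ := hφ₁
  obtain ⟨M₀₁, hM₀₁, -, hker₀₁, -⟩ := hφ₀₁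
  obtain ⟨c, w, hw, hmw⟩ := exists_eq_prime_pow_mul_intCoprime hp hm
  have htors : ∀ x ∈ ker φ₀₁, ∃ n ∈ intCoprime p, (p : A₀₁) ^ (c * k) * ((n : A₀₁) * x) = 0 :=
    fun x hx => ⟨w ^ k, pow_mem hw k, by
      rw [← hk x hx, ← Int.cast_natCast m, hmw]; push_cast; ring⟩
  have hnil : ∀ x ∈ ker φ₀₁, ∃ n ∈ intCoprime p, ((n : A₀₁) * x) ^ p ^ M₀₁ = 0 := fun x hx =>
    (hker₀₁ x hx).imp fun _ ⟨hn, h⟩ =>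
      ⟨hn, mul_pow_eq_zero_of_mul_pow_eq_zero hM₀₁ (Nat.lt_pow_self hp.one_lt).le h⟩
  exact ⟨M₀ + M₁, by omega, N₀ + N₁ + M₀₁ * (c * k),
    exists_intCast_mul_pow_eq_zero_of_mem_ker_fiberMap hker₀ hker₁,
    exists_intCast_mul_pow_mem_range_fiberMap hp him₀ him₁ htors hnil⟩

end FiberProduct

/-- The class `W(m)` is closed under pullbacks of commutative rings: if `φ₀`, `φ₁`, `φ₀₁`
form a map of cospans all belonging to `W(m)`, then the induced map of fiber products
belongs to `W(m)`. -/
theorem memW_fiberMap (m : ℕ) (hm : 1 ≤ m)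
    {A₀ A₁ A₀₁ B₀ B₁ B₀₁ : Type*}
    [CommRing A₀] [CommRing A₁] [CommRing A₀₁] [CommRing B₀] [CommRing B₁] [CommRing B₀₁]
    (α₀ : A₀ →+* A₀₁) (α₁ : A₁ →+* A₀₁) (β₀ : B₀ →+* B₀₁) (β₁ : B₁ →+* B₀₁)
    (φ₀ : A₀ →+* B₀) (φ₁ : A₁ →+* B₁) (φ₀₁ : A₀₁ →+* B₀₁)
    (h₀ : β₀.comp φ₀ = φ₀₁.comp α₀) (h₁ : β₁.comp φ₁ = φ₀₁.comp α₁)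
    (hφ₀ : MemW m φ₀) (hφ₁ : MemW m φ₁) (hφ₀₁ : MemW m φ₀₁) :
    MemW m (fiberMap α₀ α₁ β₀ β₁ φ₀ φ₁ φ₀₁ h₀ h₁) := by
  obtain ⟨⟨k₀, hker₀, him₀⟩, hloc₀⟩ := hφ₀
  obtain ⟨⟨k₁, hker₁, him₁⟩, hloc₁⟩ := hφ₁
  obtain ⟨⟨k₀₁, hker₀₁, -⟩, hloc₀₁⟩ := hφ₀₁
  refine ⟨⟨k₀ + k₁ + k₀₁, ?_, ?_⟩, fun p hp => ?_⟩
  · exact pow_mul_eq_zero_of_mem_ker_fiberMap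
      (fun x hx => pow_mul_eq_zero_of_le (by omega) (hker₀ x hx))
      (fun x hx => pow_mul_eq_zero_of_le (by omega) (hker₁ x hx))
  · exact pow_add_mul_mem_range_fiberMap (pow_mul_mem_range_of_le (by omega) him₀)
      (pow_mul_mem_range_of_le (by omega) him₁) hker₀₁
  · exact isUniformFpIso_locMap_fiberMap hp (by omega) hker₀₁ (hloc₀ p hp) (hloc₁ p hp)
      (hloc₀₁ p hp)
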